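/- arXiv:math/0205109 — 3 statements merged into one kernel-verified Lean document; each statement's English description precedes it below -/
import Mathlib

section
/- Let γ be smooth with γ(x,0)=x₂ and bounded t-derivative γ̇. Let ρ(u₁,u₂) solve the ordinary differential equation ρ_{u₁}(u₁,u₂) + γ̇(u₁, ρ(u₁,u₂), 0) = 0 with initial condition ρ(0,u₂)=u₂. Then for small u₁ the map u₂ ↦ ρ(u₁,u₂) is invertible with inverse σ (so σ(u₁, ρ(u₁,u₂)) = u₂), the map Φ(u₁,u₂) = (u₁, ρ(u₁,u₂)) is a local diffeomorphism, and the transformed curve γ̃(u,t) = σ(u₁−t, γ(u₁, ρ(u₁,u₂), t)), which corresponds to the conjugated family Φ^{-1}∘Γ(Φ(·),t), satisfies the normalization ∂_t γ̃(u,0) = 0. -/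
open MeasureTheory Set Filter
open scoped ENNReal NNReal
open Topology

noncomputable section

/-- Let `γ` be smooth with `γ(x,0) = x₂` and bounded `t`-derivative `γ̇`.
If `ρ` solves `ρ_{u₁}(u₁,u₂) + γ̇(u₁, ρ(u₁,u₂), 0) = 0` with `ρ(0,u₂) = u₂`, then for small
`u₁` the map `u₂ ↦ ρ(u₁,u₂)` is invertible with inverse `σ`, the map
`Φ(u) = (u₁, ρ(u₁,u₂))` is a local diffeomorphism, and the transformed curve
`γ̃(u,t) = σ(u₁ - t, γ(u₁, ρ(u₁,u₂), t))`, which corresponds to the conjugated family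
`Φ⁻¹ ∘ Γ(Φ(·), t)` for `Γ(x,t) = (x₁ - t, γ(x,t))`, satisfies `∂ₜγ̃(u,0) = 0`. -/
theorem change_of_variables_normalization
    (γ γd : ℝ × ℝ → ℝ → ℝ)
    (hγsmooth : ContDiff ℝ (⊤ : ℕ∞) (fun p : (ℝ × ℝ) × ℝ => γ p.1 p.2))
    (hγ0 : ∀ x : ℝ × ℝ, γ x 0 = x.2)
    (hγd : ∀ (x : ℝ × ℝ) (t : ℝ), HasDerivAt (γ x) (γd x t) t)
    (K : ℝ) (hγdbd : ∀ (x : ℝ × ℝ) (t : ℝ), |γd x t| ≤ K)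
    (hγdsmooth : ContDiff ℝ (⊤ : ℕ∞) (fun p : (ℝ × ℝ) × ℝ => γd p.1 p.2))
    (ρ : ℝ → ℝ → ℝ)
    (hρsmooth : ContDiff ℝ (⊤ : ℕ∞) (fun u : ℝ × ℝ => ρ u.1 u.2))
    (hρ0 : ∀ u₂ : ℝ, ρ 0 u₂ = u₂)
    (hODE : ∀ u₁ u₂ : ℝ,
      HasDerivAt (fun s => ρ s u₂) (-(γd (u₁, ρ u₁ u₂) 0)) u₁) :
    ∃ δ : ℝ, 0 < δ ∧ ∃ σ : ℝ → ℝ → ℝ,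
      -- `u₂ ↦ ρ(u₁,u₂)` is invertible with inverse `σ(u₁,·)` for `|u₁| < δ`
      (∀ u₁ : ℝ, |u₁| < δ →
        Function.LeftInverse (σ u₁) (ρ u₁) ∧ Function.RightInverse (σ u₁) (ρ u₁)) ∧
      -- `Φ(u) = (u₁, ρ(u₁,u₂))` is a diffeomorphism on `{|u₁| < δ}`:
      -- smooth, injective, with smooth two-sided inverse `Ψ(v) = (v₁, σ(v₁,v₂))`
      (InjOn (fun u : ℝ × ℝ => (u.1, ρ u.1 u.2)) {u : ℝ × ℝ | |u.1| < δ} ∧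
        ContDiffOn ℝ (⊤ : ℕ∞) (fun v : ℝ × ℝ => (v.1, σ v.1 v.2)) {v : ℝ × ℝ | |v.1| < δ} ∧
        ∀ u : ℝ × ℝ, |u.1| < δ →
          (fun v : ℝ × ℝ => (v.1, σ v.1 v.2)) ((fun u : ℝ × ℝ => (u.1, ρ u.1 u.2)) u) = u) ∧
      -- the conjugated family is `Γ̃(u,t) = (u₁ - t, γ̃(u,t))` with
      -- `γ̃(u,t) = σ(u₁ - t, γ((u₁, ρ(u₁,u₂)), t))`, and it satisfies `∂ₜγ̃(u,0) = 0`
      (∀ u : ℝ × ℝ, |u.1| < δ →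
        HasDerivAt (fun t => σ (u.1 - t) (γ (u.1, ρ u.1 u.2) t)) 0 0) := by
  classical
  have hGs : ContDiff ℝ (⊤ : ℕ∞) (fun x : ℝ × ℝ => γd x 0) :=
    hγdsmooth.comp (contDiff_id.prodMk contDiff_const)
  have hK0 : 0 ≤ K := (abs_nonneg _).trans (hγdbd (0, 0) 0)
  -- Step A : `|ρ s y - y| ≤ K |s|`
  have hbd : ∀ s y : ℝ, |ρ s y - y| ≤ K * |s| := by
    intro s y
    have h1 : ∀ x ∈ (univ : Set ℝ), HasDerivWithinAt (fun s' => ρ s' y)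
        (-(γd (x, ρ x y) 0)) univ x := fun x _ => (hODE x y).hasDerivWithinAt
    have h2 : ∀ x ∈ (univ : Set ℝ), ‖-(γd (x, ρ x y) 0)‖ ≤ K := by
      intro x _
      rw [Real.norm_eq_abs, abs_neg]; exact hγdbd _ 0
    have := convex_univ.norm_image_sub_le_of_norm_hasDerivWithin_le h1 h2 (mem_univ 0) (mem_univ s)
    simpa [hρ0 y, Real.norm_eq_abs] using this
  -- Step B : surjectivity of `ρ s`
  have hcontρ : ∀ s : ℝ, Continuous (ρ s) := by
    intro s
    have : Continuous fun y : ℝ => (fun u : ℝ × ℝ => ρ u.1 u.2) (s, y) :=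
      hρsmooth.continuous.comp (continuous_const.prodMk continuous_id)
    simpa using this
  have hsurj : ∀ s : ℝ, Function.Surjective (ρ s) := by
    intro s
    apply Continuous.surjective (hcontρ s)
    · apply tendsto_atTop_mono (f := fun y : ℝ => y + (-(K * |s|)))
        (fun y => ?_) (tendsto_atTop_add_const_right _ (-(K * |s|)) tendsto_id)
      have := (abs_le.1 (hbd s y)).1
      linarith
    · apply tendsto_atBot_mono (f := fun y : ℝ => y + (K * |s|))
        (fun y => ?_) (tendsto_atBot_add_const_right _ (K * |s|) tendsto_id)
      have := (abs_le.1 (hbd s y)).2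
      linarith
  -- Step C : local Lipschitz bounds for the ODE right-hand side
  have hlip : ∀ T R : ℝ, ∃ L : NNReal, ∀ t ∈ Icc (-T) T,
      LipschitzOnWith L (fun y => -(γd (t, y) 0)) (Metric.closedBall (0:ℝ) R) := by
    intro T R
    have hDG : Continuous (fderiv ℝ (fun x : ℝ × ℝ => γd x 0)) :=
      (hGs.fderiv_right (m := (⊤ : ℕ∞)) (by simp)).continuous
    obtain ⟨L0, hL0⟩ :=
      (isCompact_Icc.prod (isCompact_closedBall (0:ℝ) R)).exists_bound_of_continuousOn
      (hDG.continuousOn (s := Icc (-T) T ×ˢ Metric.closedBall 0 R))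
    refine ⟨Real.toNNReal L0, fun t ht => ?_⟩
    rw [lipschitzOnWith_iff_dist_le_mul]
    intro x hx y hy
    have key : ∀ z ∈ Metric.closedBall (0:ℝ) R, HasDerivWithinAt (fun y' => -(γd (t, y') 0))
        (-(fderiv ℝ (fun x : ℝ × ℝ => γd x 0) (t, z) (0, 1))) (Metric.closedBall 0 R) z := by
      intro z _
      have hcurve : HasDerivAt (fun y' : ℝ => ((t, y') : ℝ × ℝ)) ((0:ℝ), (1:ℝ)) z :=
        (hasDerivAt_const z t).prodMk (hasDerivAt_id z)
      exact (((hGs.differentiable (by simp) (t, z)).hasFDerivAt.comp_hasDerivAt z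
        hcurve).neg).hasDerivWithinAt
    have bound : ∀ z ∈ Metric.closedBall (0:ℝ) R,
        ‖-(fderiv ℝ (fun x : ℝ × ℝ => γd x 0) (t, z) (0, 1))‖ ≤ max L0 0 := by
      intro z hz
      rw [norm_neg]
      have h1 : ‖fderiv ℝ (fun x : ℝ × ℝ => γd x 0) (t, z)‖ ≤ max L0 0 :=
        le_max_of_le_left (hL0 _ ⟨ht, hz⟩)
      calc ‖fderiv ℝ (fun x : ℝ × ℝ => γd x 0) (t, z) (0, 1)‖
          ≤ ‖fderiv ℝ (fun x : ℝ × ℝ => γd x 0) (t, z)‖ * ‖((0:ℝ), (1:ℝ))‖ :=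
            ContinuousLinearMap.le_opNorm _ _
        _ ≤ max L0 0 * 1 := by
            apply mul_le_mul h1 ?_ (norm_nonneg _) (le_max_right _ _)
            rw [Prod.norm_def]; simp
        _ = max L0 0 := mul_one _
    have := (convex_closedBall (0:ℝ) R).norm_image_sub_le_of_norm_hasDerivWithin_le key bound hy hx
    rw [Real.dist_eq, Real.dist_eq, Real.coe_toNNReal']
    simpa [Real.norm_eq_abs] using this
  -- Step D : injectivity of `ρ s` (uniqueness of ODE solutions)
  have hinj : ∀ s : ℝ, Function.Injective (ρ s) := by
    intro u₁ u₂ u₂' h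
    set T : ℝ := |u₁| + 1 with hT
    set R : ℝ := max |u₂| |u₂'| + K * T + 1 with hR
    obtain ⟨L, hL⟩ := hlip T R
    set ss : ℝ → Set ℝ := fun t =>
      if t ∈ Icc (-T) T then Metric.closedBall (0:ℝ) R else ∅ with hss
    have hv : ∀ t, LipschitzOnWith L (fun y => -(γd (t, y) 0)) (ss t) := by
      intro t
      by_cases ht : t ∈ Icc (-T) T
      · have := hL t ht
        simp only [hss]
        rwa [if_pos ht]
      · simp only [hss, if_neg ht]
        exact lipschitzOnWith_empty _ _
    have hT1 : (1:ℝ) ≤ T := by have := abs_nonneg u₁; linarith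
    have hmm : ∀ y t, |y| ≤ max |u₂| |u₂'| → t ∈ Ioo (-T) T → ρ t y ∈ ss t := by
      intro y t hy ht
      have htI : t ∈ Icc (-T) T := Ioo_subset_Icc_self ht
      have h2 : |t| ≤ T := abs_le.2 ⟨htI.1, htI.2⟩
      have h1 : |ρ t y| ≤ |y| + K * |t| := by
        calc |ρ t y| = |(ρ t y - y) + y| := by ring_nf
          _ ≤ |ρ t y - y| + |y| := abs_add_le _ _
          _ ≤ K * |t| + |y| := by linarith [hbd t y]
          _ = |y| + K * |t| := by ring
      have h3 : K * |t| ≤ K * T := mul_le_mul_of_nonneg_left h2 hK0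
      simp only [hss, if_pos htI, Metric.mem_closedBall, Real.dist_eq, sub_zero]
      calc |ρ t y| ≤ |y| + K * |t| := h1
        _ ≤ max |u₂| |u₂'| + K * T := by linarith
        _ ≤ R := by rw [hR]; linarith
    have hu₁ : u₁ ∈ Ioo (-T) T := by
      constructor
      · have := neg_abs_le u₁; rw [hT]; linarith
      · have := le_abs_self u₁; rw [hT]; linarith
    have heqon := ODE_solution_unique_of_mem_Ioo (v := fun t y => -(γd (t, y) 0)) (s := ss)
      (fun t _ => hv t) hu₁ (f := fun s => ρ s u₂) (g := fun s => ρ s u₂')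
      (fun t ht => ⟨hODE t u₂, hmm u₂ t (le_max_left _ _) ht⟩)
      (fun t ht => ⟨hODE t u₂', hmm u₂' t (le_max_right _ _) ht⟩)
      h
    have h0 : (0:ℝ) ∈ Ioo (-T) T := by constructor <;> [linarith; linarith]
    have := heqon h0
    simpa [hρ0] using this
  -- Steps E–G : the partial derivative `∂₂ρ` never vanishes
  have hgne : ∀ w : ℝ × ℝ, fderiv ℝ (fun u : ℝ × ℝ => ρ u.1 u.2) w (0, 1) ≠ 0 := by
    set P : ℝ × ℝ → ℝ := fun u => ρ u.1 u.2 with hP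
    have hPs : ContDiff ℝ (⊤ : ℕ∞) P := hρsmooth
    have hPdiff : Differentiable ℝ P := hPs.differentiable (by simp)
    set D : ℝ × ℝ → (ℝ × ℝ) →L[ℝ] ℝ := fderiv ℝ P with hD
    have hDs : ContDiff ℝ (⊤ : ℕ∞) D := hPs.fderiv_right (m := (⊤ : ℕ∞)) (by simp)
    have hcurve1 : ∀ y s : ℝ, HasDerivAt (fun s' : ℝ => ((s', y) : ℝ × ℝ)) (1, 0) s :=
      fun y s => (hasDerivAt_id s).prodMk (hasDerivAt_const s y)
    have hcurve2 : ∀ s y : ℝ, HasDerivAt (fun y' : ℝ => ((s, y') : ℝ × ℝ)) (0, 1) y :=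
      fun s y => (hasDerivAt_const y s).prodMk (hasDerivAt_id y)
    -- Step E : first-order identities
    have hD1 : ∀ u : ℝ × ℝ, D u (1, 0) = -(γd (u.1, P u) 0) := by
      intro u
      have h1 : HasDerivAt (fun s => P (s, u.2)) (D (u.1, u.2) (1, 0)) u.1 :=
        by have h := (hPdiff (u.1, u.2)).hasFDerivAt.comp_hasDerivAt u.1 (hcurve1 u.2 u.1); exact h
      have h2 : HasDerivAt (fun s => P (s, u.2)) (-(γd (u.1, P u) 0)) u.1 := hODE u.1 u.2
      have := h1.unique h2
      simpa using this
    have hD20 : ∀ y : ℝ, D (0, y) (0, 1) = 1 := by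
      intro y
      have h1 : HasDerivAt (fun y' => P (0, y')) (D (0, y) (0, 1)) y :=
        (hPdiff (0, y)).hasFDerivAt.comp_hasDerivAt y (hcurve2 0 y)
      have h2 : HasDerivAt (fun y' => P (0, y')) 1 y := by
        have heq : (fun y' : ℝ => P (0, y')) = fun y' => y' := funext fun y' => hρ0 y'
        rw [heq]; exact hasDerivAt_id y
      exact h1.unique h2
    -- Steps F and G
    rintro ⟨s₀, y⟩ hzero
    set g : ℝ → ℝ := fun s => D (s, y) (0, 1) with hgdef
    set a : ℝ → ℝ := fun s => fderiv ℝ (fun x : ℝ × ℝ => γd x 0) (s, ρ s y) (0, 1) with hadef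
    have hacont : Continuous a := by
      have h1 : Continuous fun s : ℝ => fderiv ℝ (fun x : ℝ × ℝ => γd x 0) (s, ρ s y) := by
        apply (hGs.fderiv_right (m := (⊤ : ℕ∞)) (by simp)).continuous.comp
        exact continuous_id.prodMk (hPs.continuous.comp (continuous_id.prodMk continuous_const))
      exact (ContinuousLinearMap.apply ℝ ℝ ((0:ℝ), (1:ℝ))).continuous.comp h1
    have hg' : ∀ s : ℝ, HasDerivAt g (-(a s) * g s) s := by
      intro s
      have hDw : HasFDerivAt D (fderiv ℝ D (s, y)) (s, y) :=
        ((hDs.differentiable (by simp)) _).hasFDerivAt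
      have hsymm := second_derivative_symmetric (fun u => (hPdiff u).hasFDerivAt) hDw
      have hDcurve : HasDerivAt (fun s' => D (s', y)) (fderiv ℝ D (s, y) (1, 0)) s :=
        hDw.comp_hasDerivAt s (hcurve1 y s)
      have h1 : HasDerivAt g ((fderiv ℝ D (s, y) (1, 0)) (0, 1)) s :=
        (ContinuousLinearMap.apply ℝ ℝ ((0:ℝ), (1:ℝ))).hasFDerivAt.comp_hasDerivAt s hDcurve
      have hDcurve2 : HasDerivAt (fun y' => D (s, y')) (fderiv ℝ D (s, y) (0, 1)) y :=
        hDw.comp_hasDerivAt y (hcurve2 s y)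
      have h2 : HasDerivAt (fun y' => (D (s, y')) (1, 0)) ((fderiv ℝ D (s, y) (0, 1)) (1, 0)) y :=
        (ContinuousLinearMap.apply ℝ ℝ ((1:ℝ), (0:ℝ))).hasFDerivAt.comp_hasDerivAt y hDcurve2
      have hinner : HasDerivAt (fun y' => P (s, y')) (g s) y :=
        (hPdiff (s, y)).hasFDerivAt.comp_hasDerivAt y (hcurve2 s y)
      have houter : HasDerivAt (fun z => γd (s, z) 0) (a s) (ρ s y) :=
        (hGs.differentiable (by simp) (s, ρ s y)).hasFDerivAt.comp_hasDerivAt (ρ s y)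
          (hcurve2 s (ρ s y))
      have h4 : HasDerivAt (fun y' => -(γd (s, P (s, y')) 0)) (-(a s * g s)) y := by
        have hcomp := HasDerivAt.comp (x := y) (h := fun y' => P (s, y')) houter hinner
        exact hcomp.neg
      have h2' : HasDerivAt (fun y' => (D (s, y')) (1, 0)) (-(a s * g s)) y := by
        have heqf : (fun y' => (D (s, y')) (1, 0)) = fun y' => -(γd (s, P (s, y')) 0) := by
          funext y'
          simpa using hD1 (s, y')
        rw [heqf]; exact h4
      have key : (fderiv ℝ D (s, y) (0, 1)) (1, 0) = -(a s * g s) := h2.unique h2'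
      have hval : (fderiv ℝ D (s, y) (1, 0)) (0, 1) = -(a s * g s) := by
        rw [hsymm (1, 0) (0, 1)]; exact key
      rw [hval] at h1
      simpa [neg_mul] using h1
    have hg0 : g 0 = 1 := hD20 y
    set T : ℝ := |s₀| + 1 with hT
    obtain ⟨L0, hL0⟩ := isCompact_Icc.exists_bound_of_continuousOn
      (hacont.continuousOn (s := Icc (-T) T))
    set ss : ℝ → Set ℝ := fun t => if t ∈ Icc (-T) T then (univ : Set ℝ) else ∅ with hss
    have hv : ∀ t, LipschitzOnWith (Real.toNNReal L0) (fun x => -(a t) * x) (ss t) := by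
      intro t
      by_cases ht : t ∈ Icc (-T) T
      · simp only [hss]
        rw [if_pos ht, lipschitzOnWith_iff_dist_le_mul]
        intro x _ x' _
        rw [Real.dist_eq, Real.dist_eq, Real.coe_toNNReal']
        have heq : -(a t) * x - -(a t) * x' = -(a t) * (x - x') := by ring
        rw [heq, abs_mul, abs_neg]
        have h1 : |a t| ≤ max L0 0 := le_max_of_le_left (by
          simpa [Real.norm_eq_abs] using hL0 t ht)
        exact mul_le_mul_of_nonneg_right h1 (abs_nonneg _)
      · simp only [hss]
        rw [if_neg ht]
        exact lipschitzOnWith_empty _ _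
    have hT1 : (1:ℝ) ≤ T := by have := abs_nonneg s₀; rw [hT]; linarith
    have hs₀ : s₀ ∈ Ioo (-T) T := by
      constructor
      · have := neg_abs_le s₀; rw [hT]; linarith
      · have := le_abs_self s₀; rw [hT]; linarith
    have h0 : (0:ℝ) ∈ Ioo (-T) T := by
      constructor <;> simp only [hT] <;> [nlinarith [abs_nonneg s₀]; nlinarith [abs_nonneg s₀]]
    have hmem : ∀ t, t ∈ Ioo (-T) T → ∀ x : ℝ, x ∈ ss t := by
      intro t ht x
      simp only [hss]
      rw [if_pos (Ioo_subset_Icc_self ht)]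
      exact mem_univ x
    have heqon := ODE_solution_unique_of_mem_Ioo (v := fun t x => -(a t) * x) (s := ss)
      (fun t _ => hv t) hs₀ (f := g) (g := fun _ => (0:ℝ))
      (fun t ht => ⟨hg' t, hmem t ht _⟩)
      (fun t ht => ⟨by simpa using hasDerivAt_const t (0:ℝ), hmem t ht _⟩)
      (by simpa [hgdef] using hzero)
    have := heqon h0
    rw [hg0] at this
    exact one_ne_zero this
  -- the global inverse
  have hleft : ∀ v₁ : ℝ, Function.LeftInverse (Function.invFun (ρ v₁)) (ρ v₁) :=
    fun v₁ => Function.leftInverse_invFun (hinj v₁)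
  have hright : ∀ v₁ : ℝ, Function.RightInverse (Function.invFun (ρ v₁)) (ρ v₁) :=
    fun v₁ => Function.rightInverse_invFun (hsurj v₁)
  -- Step H : smoothness of the inverse map, via the inverse function theorem
  have hσct : ∀ v : ℝ × ℝ,
      ContDiffAt ℝ (⊤ : ℕ∞) (fun v : ℝ × ℝ => (v.1, Function.invFun (ρ v.1) v.2)) v := by
    set P : ℝ × ℝ → ℝ := fun u => ρ u.1 u.2 with hP
    have hPs : ContDiff ℝ (⊤ : ℕ∞) P := hρsmooth
    have hPdiff : Differentiable ℝ P := hPs.differentiable (by simp)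
    set D : ℝ × ℝ → (ℝ × ℝ) →L[ℝ] ℝ := fderiv ℝ P with hD
    set σ : ℝ → ℝ → ℝ := fun v₁ => Function.invFun (ρ v₁) with hσ
    set Φ : ℝ × ℝ → ℝ × ℝ := fun u => (u.1, P u) with hΦdef
    set Ψ : ℝ × ℝ → ℝ × ℝ := fun v => (v.1, σ v.1 v.2) with hΨdef
    have hΦΨ : ∀ v, Φ (Ψ v) = v := fun v => Prod.ext rfl (hright v.1 v.2)
    have hΦs : ContDiff ℝ (⊤ : ℕ∞) Φ := contDiff_fst.prodMk hPs
    intro v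
    set u : ℝ × ℝ := Ψ v with hu
    have hΦu : Φ u = v := hΦΨ v
    have hM : HasFDerivAt Φ ((ContinuousLinearMap.fst ℝ ℝ ℝ).prod (D u)) u :=
      hasFDerivAt_fst.prodMk (hPdiff u).hasFDerivAt
    set b : ℝ := D u (1, 0) with hb
    set c : ℝ := D u (0, 1) with hc
    have hcne : c ≠ 0 := hgne u
    have hlin : ∀ x : ℝ × ℝ, D u x = x.1 * b + x.2 * c := by
      intro x
      have hx : x = x.1 • ((1:ℝ), (0:ℝ)) + x.2 • ((0:ℝ), (1:ℝ)) := by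
        ext <;> simp
      conv_lhs => rw [hx]
      rw [(D u).map_add, (D u).map_smul, (D u).map_smul]
      simp [hb, hc, smul_eq_mul, mul_comm]
    set N : (ℝ × ℝ) →L[ℝ] ℝ × ℝ := (ContinuousLinearMap.fst ℝ ℝ ℝ).prod
      (c⁻¹ • (ContinuousLinearMap.snd ℝ ℝ ℝ - b • ContinuousLinearMap.fst ℝ ℝ ℝ)) with hN
    set Mu : (ℝ × ℝ) →L[ℝ] ℝ × ℝ := (ContinuousLinearMap.fst ℝ ℝ ℝ).prod (D u) with hMu
    have h₁ : Function.LeftInverse N Mu := by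
      intro x
      have : Mu x = (x.1, x.1 * b + x.2 * c) := by
        simp [hMu, ContinuousLinearMap.prod_apply, hlin x]
      rw [this]
      simp only [hN, ContinuousLinearMap.prod_apply, ContinuousLinearMap.coe_fst',
        ContinuousLinearMap.smul_apply, ContinuousLinearMap.coe_sub',
        ContinuousLinearMap.coe_snd', Pi.sub_apply, ContinuousLinearMap.coe_smul']
      ext
      · rfl
      · show c⁻¹ * ((x.1 * b + x.2 * c) - b * x.1) = x.2
        field_simp
        ring
    have h₂ : Function.RightInverse N Mu := by
      intro x
      have hNx : N x = (x.1, c⁻¹ * (x.2 - b * x.1)) := by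
        simp [hN, ContinuousLinearMap.prod_apply]
      rw [hNx]
      have : Mu (x.1, c⁻¹ * (x.2 - b * x.1)) = (x.1, x.1 * b + (c⁻¹ * (x.2 - b * x.1)) * c) := by
        simp [hMu, ContinuousLinearMap.prod_apply, hlin]
      rw [this]
      ext
      · rfl
      · show x.1 * b + (c⁻¹ * (x.2 - b * x.1)) * c = x.2
        field_simp
        ring
    set e : (ℝ × ℝ) ≃L[ℝ] ℝ × ℝ := ContinuousLinearEquiv.equivOfInverse Mu N h₁ h₂ with he
    have hM' : HasFDerivAt Φ (e : (ℝ × ℝ) →L[ℝ] ℝ × ℝ) u := hM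
    have hinv : ContDiffAt ℝ (⊤ : ℕ∞) ((hΦs.contDiffAt (x := u)).localInverse hM' (by simp)) (Φ u) :=
      (hΦs.contDiffAt (x := u)).to_localInverse hM' (by simp)
    have hev : ∀ᶠ w in 𝓝 (Φ u),
        Φ (((hΦs.contDiffAt (x := u)).localInverse hM' (by simp)) w) = w :=
      ((hΦs.contDiffAt (x := u)).hasStrictFDerivAt' hM' (by simp)).eventually_right_inverse
    have heq : Ψ =ᶠ[𝓝 (Φ u)] ((hΦs.contDiffAt (x := u)).localInverse hM' (by simp)) := by
      filter_upwards [hev] with w hw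
      set lw := ((hΦs.contDiffAt (x := u)).localInverse hM' (by simp)) w with hlw
      have hw' : ((lw.1, ρ lw.1 lw.2) : ℝ × ℝ) = w := hw
      have h1 : lw.1 = w.1 := by rw [← hw']
      have h2 : ρ lw.1 lw.2 = w.2 := by rw [← hw']
      rw [h1] at h2
      have h3 : lw.2 = σ w.1 w.2 := hinj w.1 (by rw [h2, hright w.1 w.2])
      refine Prod.ext ?_ ?_
      · exact h1.symm
      · exact h3.symm
    have hfin := hinv.congr_of_eventuallyEq heq
    rw [hΦu] at hfin
    exact hfin
  -- assemble the statement
  refine ⟨1, one_pos, fun v₁ => Function.invFun (ρ v₁),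
    fun u₁ _ => ⟨hleft u₁, hright u₁⟩, ⟨?_, ?_, ?_⟩, ?_⟩
  · -- injectivity of `Φ`
    have hΦinj : Function.Injective (fun u : ℝ × ℝ => ((u.1, ρ u.1 u.2) : ℝ × ℝ)) := by
      intro p q h
      have h' : ((p.1, ρ p.1 p.2) : ℝ × ℝ) = (q.1, ρ q.1 q.2) := h
      have h1 : p.1 = q.1 := (Prod.ext_iff.mp h').1
      have h2 : ρ p.1 p.2 = ρ q.1 q.2 := (Prod.ext_iff.mp h').2
      rw [h1] at h2
      exact Prod.ext h1 (hinj q.1 h2)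
    exact hΦinj.injOn
  · -- smoothness of `Ψ`
    exact fun v _ => (hσct v).contDiffWithinAt
  · -- `Ψ ∘ Φ = id`
    intro u _
    exact Prod.ext rfl (hleft u.1 u.2)
  · -- Step I : the normalization `∂ₜγ̃(u,0) = 0`
    intro u _
    set σ : ℝ → ℝ → ℝ := fun v₁ => Function.invFun (ρ v₁) with hσ
    set Ψ : ℝ × ℝ → ℝ × ℝ := fun v => (v.1, σ v.1 v.2) with hΨdef
    set x : ℝ × ℝ := (u.1, ρ u.1 u.2) with hx
    have hΨd : HasFDerivAt Ψ (fderiv ℝ Ψ x) x :=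
      ((hσct x).differentiableAt (by simp)).hasFDerivAt
    set L : (ℝ × ℝ) →L[ℝ] ℝ × ℝ := fderiv ℝ Ψ x with hL
    have hd : HasDerivAt (fun s => ((s, ρ s u.2) : ℝ × ℝ)) (1, -(γd x 0)) u.1 :=
      (hasDerivAt_id u.1).prodMk (hODE u.1 u.2)
    have hcompd : HasDerivAt (fun s => Ψ (s, ρ s u.2)) (L (1, -(γd x 0))) u.1 :=
      hΨd.comp_hasDerivAt u.1 hd
    have hsnd : HasDerivAt (fun s => σ s (ρ s u.2)) ((L (1, -(γd x 0))).2) u.1 :=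
      (ContinuousLinearMap.snd ℝ ℝ ℝ).hasFDerivAt.comp_hasDerivAt u.1 hcompd
    have hconst : (fun s => σ s (ρ s u.2)) = fun _ => u.2 := funext fun s => hleft s u.2
    have hzero : (L (1, -(γd x 0))).2 = 0 := by
      have h2 : HasDerivAt (fun s => σ s (ρ s u.2)) 0 u.1 := by
        rw [hconst]; exact hasDerivAt_const _ _
      exact hsnd.unique h2
    have hc1 : HasDerivAt (fun t => ((u.1 - t, γ x t) : ℝ × ℝ)) (-1, γd x 0) 0 :=
      ((hasDerivAt_id 0).const_sub u.1).prodMk (hγd x 0)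
    have hpt : ((u.1 - 0, γ x 0) : ℝ × ℝ) = x := by
      rw [hx]
      refine Prod.ext ?_ ?_
      · simp
      · simpa using hγ0 x
    have hΨd' : HasFDerivAt Ψ L ((u.1 - 0, γ x 0) : ℝ × ℝ) := by rw [hpt]; exact hΨd
    have hcomp1 : HasDerivAt (fun t => Ψ (u.1 - t, γ x t)) (L (-1, γd x 0)) 0 :=
      hΨd'.comp_hasDerivAt 0 hc1
    have hfinal : HasDerivAt (fun t => σ (u.1 - t) (γ x t)) ((L (-1, γd x 0)).2) 0 :=
      (ContinuousLinearMap.snd ℝ ℝ ℝ).hasFDerivAt.comp_hasDerivAt 0 hcomp1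
    have hzz : (L (-1, γd x 0)).2 = 0 := by
      have hneg : ((-1, γd x 0) : ℝ × ℝ) = -((1, -(γd x 0)) : ℝ × ℝ) := by
        refine Prod.ext ?_ ?_ <;> simp
      rw [hneg, L.map_neg, Prod.snd_neg, hzero, neg_zero]
    rw [hzz] at hfinal
    exact hfinal

end
end

section
/- For large j one has ∫_{|z₁−x₁| ≤ 2^{-j+1}} 2^{-j} |γ̈(x, x₁−z₁)| dz₁ ≲ 2^{-a_j}, uniformly in x. -/
/-!
Write `φ = γ̇(x, ·)` and `f = γ̈(x, ·)`. The doubling bounds give `φ 0 = 0` and `φ ≠ 0` elsewhere,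
so `φ` has constant sign on each side of `0`. There `f = a + E` with `a` of constant sign and
`|E| ≤ κ |φ|`, and a Gronwall argument shows that `|φ|` is increasing in `|t|` up to the factor
`exp (κ c₀)`. Hence `|φ| ≲ C₀ g(A t) = C₀ g(2^{-5-j} B)` on `[-2^{-j+1}, 2^{-j+1}]`, with
`t = 2^{15-j}`. On each side `|f| ≤ ±f + 2κ|φ|`, so by the fundamental theorem of calculus
`∫ |f|` is bounded by a multiple of `sup |φ|`, and the definition of `a_j` concludes.
-/

open MeasureTheory Set Filter Real

theorem monotoneOn_mul_exp_of_deriv_add_mul_nonneg {ψ ψ' : ℝ → ℝ} {k a b : ℝ}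
    (hψ : ∀ t ∈ Icc a b, HasDerivAt ψ (ψ' t) t) (h : ∀ t ∈ Ioo a b, 0 ≤ ψ' t + k * ψ t) :
    MonotoneOn (fun t => ψ t * exp (k * t)) (Icc a b) := by
  have hd : ∀ t ∈ Icc a b,
      HasDerivAt (fun t => ψ t * exp (k * t)) ((ψ' t + k * ψ t) * exp (k * t)) t := by
    intro t ht
    exact ((hψ t ht).mul ((hasDerivAt_id' t).const_mul k).exp).congr_deriv (by ring)
  refine monotoneOn_of_hasDerivWithinAt_nonneg (f' := fun t => (ψ' t + k * ψ t) * exp (k * t))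
    (convex_Icc a b)
    (fun t ht => (hd t ht).continuousAt.continuousWithinAt) (fun t ht => ?_) (fun t ht => ?_)
  all_goals rw [interior_Icc] at ht
  · exact (hd t (Ioo_subset_Icc_self ht)).hasDerivWithinAt
  · exact mul_nonneg (h t ht) (exp_pos _).le

theorem IsPreconnected.forall_pos_or_forall_neg {X : Type*} [TopologicalSpace X] {s : Set X}
    (hs : IsPreconnected s) {φ : X → ℝ} (hφ : ContinuousOn φ s) (hne : ∀ t ∈ s, φ t ≠ 0) :
    (∀ t ∈ s, 0 < φ t) ∨ ∀ t ∈ s, φ t < 0 := by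
  by_contra! h
  obtain ⟨⟨t₁, ht₁, h₁⟩, t₂, ht₂, h₂⟩ := h
  obtain ⟨t, ht, h0⟩ := hs.intermediate_value ht₁ ht₂ hφ ⟨h₁, h₂⟩
  exact hne t ht h0

theorem intervalIntegrable_of_abs_of_hasDerivAt {φ f : ℝ → ℝ} {a b : ℝ}
    (hφ : ∀ t ∈ uIcc a b, HasDerivAt φ (f t) t)
    (hf : IntervalIntegrable (fun t => |f t|) volume a b) : IntervalIntegrable f volume a b := by
  rw [intervalIntegrable_iff] at hf ⊢
  refine hf.mono' ?_ (Eventually.of_forall fun t => (Real.norm_eq_abs _).le)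
  exact (measurable_deriv φ).aestronglyMeasurable.congr
    ((ae_restrict_mem measurableSet_uIoc).mono fun t ht => (hφ t (uIoc_subset_uIcc ht)).deriv)

/-- The quasi-monotonicity hypothesis `γ̈ = a + O(γ̇)` on `[0, c]`, with `φ = γ̇` and `f = γ̈`. -/
structure QuasiMonotoneDeriv (φ f a E : ℝ → ℝ) (κ c : ℝ) : Prop where
  hasDerivAt : ∀ t ∈ Icc 0 c, HasDerivAt φ (f t) t
  eq_add : ∀ t ∈ Ioc 0 c, f t = a t + E t
  sign : (∀ t ∈ Ioc 0 c, 0 ≤ a t) ∨ ∀ t ∈ Ioc 0 c, a t ≤ 0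
  abs_error_le : ∀ t ∈ Ioc 0 c, |E t| ≤ κ * |φ t|

namespace QuasiMonotoneDeriv

variable {φ f a E : ℝ → ℝ} {κ c : ℝ}

theorem of_abs_le (hφ : ∀ t, |t| ≤ c → HasDerivAt φ (f t) t)
    (hQM : ∀ t, |t| ≤ c → f t = a t + E t)
    (hsign : (∀ t ∈ Ioc 0 c, 0 ≤ a t) ∨ ∀ t ∈ Ioc 0 c, a t ≤ 0)
    (hE : ∀ t, |t| ≤ c → |E t| ≤ κ * |φ t|) : QuasiMonotoneDeriv φ f a E κ c where
  hasDerivAt t ht := hφ t ((abs_of_nonneg ht.1).le.trans ht.2)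
  eq_add t ht := hQM t ((abs_of_pos ht.1).le.trans ht.2)
  sign := hsign
  abs_error_le t ht := hE t ((abs_of_pos ht.1).le.trans ht.2)

theorem of_abs_le_comp_neg (hφ : ∀ t, |t| ≤ c → HasDerivAt φ (f t) t)
    (hQM : ∀ t, |t| ≤ c → f t = a t + E t)
    (hsign : (∀ t ∈ Ico (-c) 0, 0 ≤ a t) ∨ ∀ t ∈ Ico (-c) 0, a t ≤ 0)
    (hE : ∀ t, |t| ≤ c → |E t| ≤ κ * |φ t|) :
    QuasiMonotoneDeriv (fun t => φ (-t)) (fun t => -f (-t)) (fun t => -a (-t))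
      (fun t => -E (-t)) κ c := by
  have hmem : ∀ t ∈ Ioc 0 c, -t ∈ Ico (-c) 0 := fun t ht => ⟨neg_le_neg ht.2, neg_neg_of_pos ht.1⟩
  refine of_abs_le (fun t ht => ?_) (fun t ht => ?_) (hsign.symm.imp ?_ ?_) fun t ht => ?_
  · simpa [Function.comp_def] using (hφ (-t) (by rwa [abs_neg])).comp t (hasDerivAt_neg t)
  · rw [hQM (-t) (by rwa [abs_neg]), neg_add]
  · exact fun h t ht => by simpa using h (-t) (hmem t ht)
  · exact fun h t ht => by simpa using h (-t) (hmem t ht)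
  · simpa using hE (-t) (by rwa [abs_neg])

theorem neg (hq : QuasiMonotoneDeriv φ f a E κ c) :
    QuasiMonotoneDeriv (-φ) (-f) (-a) (-E) κ c where
  hasDerivAt t ht := (hq.hasDerivAt t ht).neg
  eq_add t ht := by simp only [Pi.neg_apply, hq.eq_add t ht, neg_add]
  sign := hq.sign.symm.imp (fun h t ht => by simpa using h t ht) fun h t ht => by
    simpa using h t ht
  abs_error_le t ht := by simpa using hq.abs_error_le t ht

theorem mono (hq : QuasiMonotoneDeriv φ f a E κ c) {c' : ℝ} (hc : c' ≤ c) :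
    QuasiMonotoneDeriv φ f a E κ c' where
  hasDerivAt t ht := hq.hasDerivAt t ⟨ht.1, ht.2.trans hc⟩
  eq_add t ht := hq.eq_add t ⟨ht.1, ht.2.trans hc⟩
  sign := hq.sign.imp (fun h t ht => h t ⟨ht.1, ht.2.trans hc⟩) fun h t ht =>
    h t ⟨ht.1, ht.2.trans hc⟩
  abs_error_le t ht := hq.abs_error_le t ⟨ht.1, ht.2.trans hc⟩

/-- Gronwall: `φ e^{κt}` is increasing when `a ≥ 0`; when `a ≤ 0` the same argument applied to
`-φ e^{-κt}` forces `φ ≡ 0`, which the nonvanishing rules out. -/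
theorem abs_le_exp_mul_abs (hq : QuasiMonotoneDeriv φ f a E κ c) (hκ : 0 ≤ κ) (hφ0 : φ 0 = 0)
    (hne : ∀ t ∈ Ioc 0 c, φ t ≠ 0) {s t : ℝ} (hs : 0 ≤ s) (hst : s ≤ t) (htc : t ≤ c) :
    |φ s| ≤ exp (κ * c) * |φ t| := by
  wlog hpos : ∀ t ∈ Ioc 0 c, 0 < φ t generalizing φ f a E
  · have hcont : ContinuousOn φ (Ioc 0 c) := fun t ht =>
      (hq.hasDerivAt t (Ioc_subset_Icc_self ht)).continuousAt.continuousWithinAt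
    have hneg := (isPreconnected_Ioc.forall_pos_or_forall_neg hcont hne).resolve_left hpos
    simpa using this hq.neg (by simpa using hφ0) (fun t ht => neg_ne_zero.2 (hne t ht))
      fun t ht => by simpa using hneg t ht
  rcases eq_or_lt_of_le hs with rfl | hs0
  · rw [hφ0, abs_zero]
    positivity
  have hc : 0 < c := hs0.trans_le (hst.trans htc)
  have hE : ∀ u ∈ Ioo 0 c, -(κ * φ u) ≤ E u ∧ E u ≤ κ * φ u := fun u hu => by
    have := hq.abs_error_le u (Ioo_subset_Ioc_self hu)
    rwa [abs_of_pos (hpos u (Ioo_subset_Ioc_self hu)), abs_le] at this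
  rcases hq.sign with ha | ha
  · have hmono := monotoneOn_mul_exp_of_deriv_add_mul_nonneg (k := κ) hq.hasDerivAt fun u hu => by
      rw [hq.eq_add u (Ioo_subset_Ioc_self hu)]
      linarith [ha u (Ioo_subset_Ioc_self hu), (hE u hu).1]
    have hφs := (hpos s ⟨hs0, hst.trans htc⟩).le
    have hφt := (hpos t ⟨hs0.trans_le hst, htc⟩).le
    rw [abs_of_nonneg hφs, abs_of_nonneg hφt]
    calc φ s ≤ φ s * exp (κ * s) := le_mul_of_one_le_right hφs (one_le_exp (by positivity))
      _ ≤ φ t * exp (κ * t) := hmono ⟨hs, hst.trans htc⟩ ⟨hs.trans hst, htc⟩ hst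
      _ ≤ exp (κ * c) * φ t := by
        rw [mul_comm]; gcongr
  · have hmono := monotoneOn_mul_exp_of_deriv_add_mul_nonneg (ψ := -φ) (k := -κ)
      (fun u hu => (hq.hasDerivAt u hu).neg) fun u hu => by
        simp only [Pi.neg_apply, hq.eq_add u (Ioo_subset_Ioc_self hu)]
        linarith [ha u (Ioo_subset_Ioc_self hu), (hE u hu).2]
    have h0c := hmono (left_mem_Icc.2 hc.le) (right_mem_Icc.2 hc.le) hc.le
    simp only [Pi.neg_apply, hφ0, neg_zero, zero_mul, neg_mul, neg_nonneg] at h0c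
    exact absurd h0c (mul_pos (hpos c (right_mem_Ioc.2 hc)) (exp_pos _)).not_ge

theorem integral_abs_le (hq : QuasiMonotoneDeriv φ f a E κ c) (hκ : 0 ≤ κ) (hc : 0 ≤ c)
    (hφ0 : φ 0 = 0) {M : ℝ} (hM : ∀ t ∈ Icc 0 c, |φ t| ≤ M)
    (hf : IntervalIntegrable (fun t => |f t|) volume 0 c) :
    ∫ t in 0..c, |f t| ≤ (1 + 2 * κ * c) * M := by
  wlog ha : ∀ t ∈ Ioc 0 c, 0 ≤ a t generalizing φ f a E
  · simpa using this hq.neg (by simpa using hφ0) (by simpa using hM) (by simpa using hf)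
      fun t ht => by simpa using hq.sign.resolve_left ha t ht
  have hderiv : ∀ t ∈ uIcc 0 c, HasDerivAt φ (f t) t := by
    rw [uIcc_of_le hc]; exact hq.hasDerivAt
  have hfint := intervalIntegrable_of_abs_of_hasDerivAt hderiv hf
  have hφint : IntervalIntegrable (fun t => |φ t|) volume 0 c :=
    (ContinuousOn.abs fun t ht => (hderiv t ht).continuousAt.continuousWithinAt).intervalIntegrable
  have hpt : ∀ t ∈ Ioo 0 c, |f t| ≤ f t + 2 * κ * |φ t| := fun t ht => by
    have ht' := Ioo_subset_Ioc_self ht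
    rw [hq.eq_add t ht']
    linarith [abs_add_le (a t) (E t), abs_of_nonneg (ha t ht'), neg_abs_le (E t),
      hq.abs_error_le t ht']
  calc ∫ t in 0..c, |f t| ≤ ∫ t in 0..c, (f t + 2 * κ * |φ t|) :=
        intervalIntegral.integral_mono_on_of_le_Ioo hc hf (hfint.add (hφint.const_mul _)) hpt
    _ = (φ c - φ 0) + 2 * κ * ∫ t in 0..c, |φ t| := by
        rw [intervalIntegral.integral_add hfint (hφint.const_mul _),
          intervalIntegral.integral_const_mul,
          intervalIntegral.integral_eq_sub_of_hasDerivAt hderiv hfint]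
    _ ≤ M + 2 * κ * ((c - 0) • M) := by
        rw [hφ0, sub_zero, ← intervalIntegral.integral_const]
        gcongr
        · exact (le_abs_self _).trans (hM c (right_mem_Icc.2 hc))
        · exact intervalIntegral.integral_mono_on hc hφint intervalIntegrable_const hM
    _ = (1 + 2 * κ * c) * M := by rw [sub_zero, smul_eq_mul]; ring

theorem integral_abs_le_exp_mul_abs (hq : QuasiMonotoneDeriv φ f a E κ c) (hκ : 0 ≤ κ)
    (hφ0 : φ 0 = 0) (hne : ∀ t ∈ Ioc 0 c, φ t ≠ 0) {h t : ℝ} (hh : 0 ≤ h) (hht : h ≤ t)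
    (htc : t ≤ c) (hf : IntervalIntegrable (fun s => |f s|) volume 0 h) :
    ∫ s in 0..h, |f s| ≤ (1 + 2 * κ * c) * (exp (κ * c) * |φ t|) := by
  refine ((hq.mono (hht.trans htc)).integral_abs_le hκ hh hφ0 (fun s hs =>
    hq.abs_le_exp_mul_abs hκ hφ0 hne hs.1 (hs.2.trans hht) htc) hf).trans ?_
  gcongr
  exact hht.trans htc

end QuasiMonotoneDeriv

theorem integral_abs_deriv_le_of_quasiMonotone {φ f a E : ℝ → ℝ} {κ c h t M : ℝ} (hκ : 0 ≤ κ)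
    (hφ : ∀ s, |s| ≤ c → HasDerivAt φ (f s) s) (hQM : ∀ s, |s| ≤ c → f s = a s + E s)
    (hsignpos : (∀ s ∈ Ioc 0 c, 0 ≤ a s) ∨ ∀ s ∈ Ioc 0 c, a s ≤ 0)
    (hsignneg : (∀ s ∈ Ico (-c) 0, 0 ≤ a s) ∨ ∀ s ∈ Ico (-c) 0, a s ≤ 0)
    (hE : ∀ s, |s| ≤ c → |E s| ≤ κ * |φ s|) (hφ0 : φ 0 = 0)
    (hne : ∀ s, s ≠ 0 → |s| ≤ c → φ s ≠ 0) (hh : 0 ≤ h) (hht : h ≤ t) (htc : t ≤ c)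
    (hM : ∀ s, |s| = t → |φ s| ≤ M) :
    ∫ s in -h..h, |f s| ≤ 2 * (1 + 2 * κ * c) * exp (κ * c) * M := by
  have hc : 0 ≤ c := hh.trans (hht.trans htc)
  have ht : |t| = t := abs_of_nonneg (hh.trans hht)
  by_cases hint : IntervalIntegrable (fun s => |f s|) volume (-h) h
  swap
  · have hMnn : 0 ≤ M := (abs_nonneg _).trans (hM t ht)
    rw [intervalIntegral.integral_undef hint]
    positivity
  have h0 : (0 : ℝ) ∈ uIcc (-h) h := mem_uIcc.2 (Or.inl ⟨neg_nonpos.2 hh, hh⟩)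
  have hintL : IntervalIntegrable (fun s => |f s|) volume (-h) 0 :=
    hint.mono_set (uIcc_subset_uIcc left_mem_uIcc h0)
  have hintR : IntervalIntegrable (fun s => |f s|) volume 0 h :=
    hint.mono_set (uIcc_subset_uIcc h0 right_mem_uIcc)
  have hintL' : IntervalIntegrable (fun s => |-f (-s)|) volume 0 h := by
    simpa using ((IntervalIntegrable.iff_comp_neg (by simp)).1 hintL).symm
  have hreflect : ∫ s in -h..0, |f s| = ∫ s in 0..h, |-f (-s)| := by
    simp only [abs_neg, intervalIntegral.integral_comp_neg fun s => |f s|, neg_zero]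
  have hL := (QuasiMonotoneDeriv.of_abs_le_comp_neg hφ hQM hsignneg hE).integral_abs_le_exp_mul_abs
    hκ (by simpa using hφ0) (fun s hs => hne (-s) (neg_ne_zero.2 hs.1.ne')
      (by rw [abs_neg]; exact (abs_of_pos hs.1).le.trans hs.2)) hh hht htc hintL'
  have hR := (QuasiMonotoneDeriv.of_abs_le hφ hQM hsignpos hE).integral_abs_le_exp_mul_abs
    hκ hφ0 (fun s hs => hne s hs.1.ne' ((abs_of_pos hs.1).le.trans hs.2)) hh hht htc hintR
  rw [← intervalIntegral.integral_add_adjacent_intervals hintL hintR, hreflect]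
  calc _ ≤ (1 + 2 * κ * c) * (exp (κ * c) * |φ (-t)|)
        + (1 + 2 * κ * c) * (exp (κ * c) * |φ t|) := add_le_add hL hR
    _ ≤ (1 + 2 * κ * c) * (exp (κ * c) * M) + (1 + 2 * κ * c) * (exp (κ * c) * M) := by
        gcongr
        exacts [hM (-t) (by rw [abs_neg, ht]), hM t ht]
    _ = 2 * (1 + 2 * κ * c) * exp (κ * c) * M := by ring

theorem sublemma_part_i_general
    (c₀ A C₀ κ : ℝ) (hc₀ : 0 < c₀) (hA : 1 ≤ A) (hC₀ : 1 ≤ C₀) (hκ : 0 ≤ κ)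
    (g : ℝ → ℝ)
    (hg0 : g 0 = 0)
    (hgpos : ∀ t, 0 < t → 0 < g t)
    (γd γdd : ℝ × ℝ → ℝ → ℝ)
    (hγdd : ∀ x t, |t| ≤ c₀ → HasDerivAt (γd x) (γdd x t) t)
    (a E : ℝ × ℝ → ℝ → ℝ)
    (hQM : ∀ x t, |t| ≤ c₀ → γdd x t = a x t + E x t)
    (hsignpos : ∀ x, (∀ t ∈ Ioc (0:ℝ) c₀, 0 ≤ a x t) ∨ (∀ t ∈ Ioc (0:ℝ) c₀, a x t ≤ 0))
    (hsignneg : ∀ x, (∀ t ∈ Ico (-c₀) (0:ℝ), 0 ≤ a x t) ∨ (∀ t ∈ Ico (-c₀) (0:ℝ), a x t ≤ 0))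
    (hE : ∀ x t, |t| ≤ c₀ → |E x t| ≤ κ * |γd x t|)
    (hdbl : ∀ x t, |t| ≤ c₀ →
      C₀⁻¹ * g (A⁻¹ * |t|) ≤ |γd x t| ∧ |γd x t| ≤ C₀ * g (A * |t|))
    (B : ℝ) (hB : B = 2 ^ 20 * A)
    (aj : ℤ → ℤ)
    (haj : ∀ j : ℤ, (2:ℝ) ^ (-(aj j) - 1) < (2:ℝ) ^ (-j) * g ((2:ℝ) ^ (-5 - j) * B) ∧
      (2:ℝ) ^ (-j) * g ((2:ℝ) ^ (-5 - j) * B) ≤ (2:ℝ) ^ (-(aj j))) :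
    ∃ C : ℝ, 0 < C ∧ ∃ J : ℤ, ∀ j : ℤ, J ≤ j → ∀ x : ℝ × ℝ,
      (∫ z₁ in Icc (x.1 - 2 ^ (-j + 1)) (x.1 + 2 ^ (-j + 1)),
        (2:ℝ) ^ (-j) * |γdd x (x.1 - z₁)|) ≤ C * (2:ℝ) ^ (-(aj j)) := by
  have hC₀pos : 0 < C₀ := one_pos.trans_le hC₀
  obtain ⟨n, hn⟩ := exists_pow_lt_of_lt_one hc₀ (by norm_num : (2⁻¹ : ℝ) < 1)
  refine ⟨2 * (1 + 2 * κ * c₀) * exp (κ * c₀) * C₀, by positivity, n + 15, fun j hj x => ?_⟩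
  set t : ℝ := 2 ^ (15 - j) with ht
  have htc : t ≤ c₀ := calc
    t ≤ 2 ^ (-(n : ℤ)) := zpow_le_zpow_right₀ one_le_two (by omega)
    _ ≤ c₀ := by rw [zpow_neg, zpow_natCast, ← inv_pow]; exact hn.le
  have hτ : (2:ℝ) ^ (-5 - j) * B = A * t := by
    rw [hB, ht, show 15 - j = -5 - j + 20 by ring, zpow_add₀ two_ne_zero]
    norm_num
    ring
  have hφ0 : γd x 0 = 0 :=
    abs_nonpos_iff.1 (by simpa [hg0] using (hdbl x 0 (by simpa using hc₀.le)).2)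
  have hne : ∀ s, s ≠ 0 → |s| ≤ c₀ → γd x s ≠ 0 := fun s hs hsc => abs_pos.1 <|
    lt_of_lt_of_le (mul_pos (inv_pos.2 hC₀pos) (hgpos _ (by positivity))) (hdbl x s hsc).1
  have hh : (0 : ℝ) < 2 ^ (-j + 1) := by positivity
  have hbound := integral_abs_deriv_le_of_quasiMonotone hκ (hγdd x) (hQM x) (hsignpos x)
    (hsignneg x) (hE x) hφ0 hne hh.le (zpow_le_zpow_right₀ one_le_two (by omega)) htc
    (M := C₀ * g (2 ^ (-5 - j) * B)) fun s hs => by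
      simpa [hs, hτ] using (hdbl x s (hs.le.trans htc)).2
  rw [integral_Icc_eq_integral_Ioc, ← intervalIntegral.integral_of_le (by linarith),
    intervalIntegral.integral_comp_sub_left (fun s => (2:ℝ) ^ (-j) * |γdd x s|),
    intervalIntegral.integral_const_mul, sub_add_cancel_left, sub_sub_cancel]
  calc _ ≤ (2:ℝ) ^ (-j) * (2 * (1 + 2 * κ * c₀) * exp (κ * c₀) * (C₀ * g (2 ^ (-5 - j) * B))) :=
        by gcongr
    _ = 2 * (1 + 2 * κ * c₀) * exp (κ * c₀) * C₀ * ((2:ℝ) ^ (-j) * g (2 ^ (-5 - j) * B)) := by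
        ring
    _ ≤ _ := by gcongr; exact (haj j).2

/-- Sublemma, part (i).  Under the quasi-monotonicity hypothesis
`γ̈(x,t) = a(x,t) + O(γ̇(x,t))` (with `a(x,·)` of constant sign on `t>0` and on `t<0`)
and the doubling bounds `C₀⁻¹ g(A⁻¹|t|) ≤ |γ̇(x,t)| ≤ C₀ g(A|t|)` for a doubling function
`g`, one has, for large `j` and uniformly in `x`,
`∫_{|z₁-x₁| ≤ 2^{-j+1}} 2^{-j} |γ̈(x, x₁-z₁)| dz₁ ≲ 2^{-a_j}`,
where `2^{-a_j-1} < 2^{-j} g(2^{-5-j} B) ≤ 2^{-a_j}` and `B = 2^20 A`. -/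
theorem sublemma_part_i
    (c₀ A C₀ κ : ℝ) (hc₀ : 0 < c₀) (hA : 1 ≤ A) (hC₀ : 1 ≤ C₀) (hκ : 0 ≤ κ)
    (g : ℝ → ℝ)
    (hgcont : ContinuousOn g (Ici 0)) (hg0 : g 0 = 0)
    (hgpos : ∀ t, 0 < t → 0 < g t)
    (hgdbl : ∀ t₁ t₂, 0 ≤ t₁ → A * t₁ ≤ t₂ → 2 * g t₁ ≤ g t₂)
    (γ γd γdd : ℝ × ℝ → ℝ → ℝ)
    (hγd : ∀ x t, |t| ≤ c₀ → HasDerivAt (γ x) (γd x t) t)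
    (hγdd : ∀ x t, |t| ≤ c₀ → HasDerivAt (γd x) (γdd x t) t)
    (a E : ℝ × ℝ → ℝ → ℝ)
    (hQM : ∀ x t, |t| ≤ c₀ → γdd x t = a x t + E x t)
    (hsignpos : ∀ x, (∀ t ∈ Ioc (0:ℝ) c₀, 0 ≤ a x t) ∨ (∀ t ∈ Ioc (0:ℝ) c₀, a x t ≤ 0))
    (hsignneg : ∀ x, (∀ t ∈ Ico (-c₀) (0:ℝ), 0 ≤ a x t) ∨ (∀ t ∈ Ico (-c₀) (0:ℝ), a x t ≤ 0))
    (hE : ∀ x t, |t| ≤ c₀ → |E x t| ≤ κ * |γd x t|)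
    (hdbl : ∀ x t, |t| ≤ c₀ →
      C₀⁻¹ * g (A⁻¹ * |t|) ≤ |γd x t| ∧ |γd x t| ≤ C₀ * g (A * |t|))
    (B : ℝ) (hB : B = 2 ^ 20 * A)
    (aj : ℤ → ℤ)
    (haj : ∀ j : ℤ, (2:ℝ) ^ (-(aj j) - 1) < (2:ℝ) ^ (-j) * g ((2:ℝ) ^ (-5 - j) * B) ∧
      (2:ℝ) ^ (-j) * g ((2:ℝ) ^ (-5 - j) * B) ≤ (2:ℝ) ^ (-(aj j))) :
    ∃ C : ℝ, 0 < C ∧ ∃ J : ℤ, ∀ j : ℤ, J ≤ j → ∀ x : ℝ × ℝ,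
      (∫ z₁ in Icc (x.1 - 2 ^ (-j + 1)) (x.1 + 2 ^ (-j + 1)),
        (2:ℝ) ^ (-j) * |γdd x (x.1 - z₁)|) ≤ C * (2:ℝ) ^ (-(aj j)) :=
  sublemma_part_i_general c₀ A C₀ κ hc₀ hA hC₀ hκ g hg0 hgpos γd γdd hγdd a E hQM hsignpos hsignneg
    hE hdbl B hB aj haj
end

section
/- For large j one has ∫_{2^{-j-1} ≤ |z₁−x₁| ≤ 2^{-j+1}} 2^{j} |γ̈(x, x₁−z₁)| / (γ̇(x, x₁−z₁))² dz₁ ≲ 2^{b_j}, uniformly in x. -/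
/-!
On each side of the origin write `φ = γ̇(x, ·)` and `ψ = γ̈(x, ·)`. Quasi-monotonicity gives a sign
`σ = ±1` with `σ ψ ≥ -κ |φ|`, hence `|ψ| ≤ σ ψ + 2κ |φ|`. For `v = 1/|φ|` this reads
`|v'| ≤ s v' + 2κ v` with `s = ±1`, so `s v e^{2sκt}` is monotone and, up to a factor `e^{2κ c₀}`,
`v` is bounded on `[t₀, c₀]` by its values at the endpoints, where the doubling bounds give
`v ≤ C₀ / g(A⁻¹ t₀)`. Integrating, `∫ |ψ|/φ² = ∫ |v'| ≤ s (v(β) - v(α)) + 2κ ∫ v ≲ C₀ / g(A⁻¹ t₀)`.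
For `t₀ = 2^{-j-15}` one has `A⁻¹ t₀ = 2^{5-j} B⁻¹`, so the definition of `b_j` bounds
`2^j C₀ / g(A⁻¹ t₀)` by `2 C₀ 2^{b_j}`.
-/

open MeasureTheory Set

section AbsDerivBound

variable {v v' : ℝ → ℝ} {s K p q : ℝ}

lemma hasDerivAt_const_mul_mul_exp (hs : s ^ 2 = 1) {t : ℝ} (hv : HasDerivAt v (v' t) t) :
    HasDerivAt (fun u => s * (v u * Real.exp (s * K * u)))
      ((s * v' t + K * v t) * Real.exp (s * K * t)) t := by
  refine ((hv.mul ((hasDerivAt_id t).const_mul (s * K)).exp).const_mul s).congr_deriv ?_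
  simp only [id, mul_one]
  linear_combination (K * v t * Real.exp (s * K * t)) * hs

lemma monotoneOn_const_mul_mul_exp_of_abs_le (hcont : ContinuousOn v (Icc p q))
    (hv : ∀ t ∈ Ioo p q, HasDerivAt v (v' t) t) (hs : s ^ 2 = 1)
    (hbound : ∀ t ∈ Ioo p q, |v' t| ≤ s * v' t + K * v t) :
    MonotoneOn (fun u => s * (v u * Real.exp (s * K * u))) (Icc p q) := by
  refine monotoneOn_of_hasDerivWithinAt_nonneg (convex_Icc p q)
    (continuousOn_const.mul (hcont.mul (by fun_prop))) (fun t ht => ?_) (fun t ht => ?_)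
    (f' := fun t => (s * v' t + K * v t) * Real.exp (s * K * t))
  all_goals rw [interior_Icc] at ht
  · exact (hasDerivAt_const_mul_mul_exp hs (hv t ht)).hasDerivWithinAt
  · exact mul_nonneg ((abs_nonneg _).trans (hbound t ht)) (Real.exp_pos _).le

lemma le_mul_exp_of_abs_deriv_le (hcont : ContinuousOn v (Icc p q))
    (hv : ∀ t ∈ Ioo p q, HasDerivAt v (v' t) t) (hs : s ^ 2 = 1)
    (hbound : ∀ t ∈ Ioo p q, |v' t| ≤ s * v' t + K * v t) {M : ℝ} (hK : 0 ≤ K) (hM : 0 ≤ M)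
    (hpM : v p ≤ M) (hqM : v q ≤ M) {t : ℝ} (ht : t ∈ Icc p q) :
    v t ≤ M * Real.exp (K * (q - p)) := by
  have hmono := monotoneOn_const_mul_mul_exp_of_abs_le hcont hv hs hbound
  have hpq := ht.1.trans ht.2
  rcases sq_eq_one_iff.mp hs with rfl | rfl
  · have h := hmono ht ⟨hpq, le_rfl⟩ ht.2
    simp only [one_mul] at h
    calc v t = v t * Real.exp (K * t) * Real.exp (-(K * t)) := by
          rw [mul_assoc, ← Real.exp_add]; simp
      _ ≤ v q * Real.exp (K * q) * Real.exp (-(K * t)) :=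
          mul_le_mul_of_nonneg_right h (Real.exp_pos _).le
      _ = v q * Real.exp (K * (q - t)) := by
          rw [mul_assoc, ← Real.exp_add]; ring_nf
      _ ≤ M * Real.exp (K * (q - p)) := by
          gcongr
          linarith [ht.1]
  · have h := hmono ⟨le_rfl, hpq⟩ ht ht.1
    simp only [neg_mul, one_mul, neg_le_neg_iff] at h
    calc v t = v t * Real.exp (-(K * t)) * Real.exp (K * t) := by
          rw [mul_assoc, ← Real.exp_add]; simp
      _ ≤ v p * Real.exp (-(K * p)) * Real.exp (K * t) :=
          mul_le_mul_of_nonneg_right h (Real.exp_pos _).le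
      _ = v p * Real.exp (K * (t - p)) := by
          rw [mul_assoc, ← Real.exp_add]; ring_nf
      _ ≤ M * Real.exp (K * (q - p)) := by
          gcongr
          linarith [ht.2]

lemma integrableOn_deriv_of_abs_le (hcont : ContinuousOn v (Icc p q))
    (hv : ∀ t ∈ Ioo p q, HasDerivAt v (v' t) t) (hs : s ^ 2 = 1)
    (hbound : ∀ t ∈ Ioo p q, |v' t| ≤ s * v' t + K * v t) :
    IntegrableOn v' (Icc p q) := by
  have hweighted : IntegrableOn (fun t => (s * v' t + K * v t) * Real.exp (s * K * t))
      (Icc p q) := by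
    rw [integrableOn_Icc_iff_integrableOn_Ioc]
    refine intervalIntegral.integrableOn_deriv_of_nonneg
      (continuousOn_const.mul (hcont.mul (by fun_prop)))
      (fun t ht => hasDerivAt_const_mul_mul_exp hs (hv t ht)) (fun t ht => ?_)
    exact mul_nonneg ((abs_nonneg _).trans (hbound t ht)) (Real.exp_pos _).le
  have hsum : IntegrableOn (fun t => s * v' t + K * v t) (Icc p q) := by
    refine (hweighted.mul_continuousOn (g' := fun t => Real.exp (-(s * K * t)))
      (by fun_prop) isCompact_Icc).congr_fun (fun t _ => ?_) measurableSet_Icc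
    simp only [mul_assoc, ← Real.exp_add, add_neg_cancel, Real.exp_zero, mul_one]
  refine IntegrableOn.congr_fun ((hsum.sub (hcont.integrableOn_Icc.const_mul K)).const_mul s)
    (fun t _ => ?_) measurableSet_Icc
  simp only [Pi.sub_apply]
  linear_combination v' t * hs

lemma setIntegral_abs_deriv_le (hcont : ContinuousOn v (Icc p q))
    (hv : ∀ t ∈ Ioo p q, HasDerivAt v (v' t) t) (hs : s ^ 2 = 1)
    (hbound : ∀ t ∈ Ioo p q, |v' t| ≤ s * v' t + K * v t) {M : ℝ} (hpq : p ≤ q) (hK : 0 ≤ K)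
    (hv0 : ∀ t ∈ Icc p q, 0 ≤ v t) (hvM : ∀ t ∈ Icc p q, v t ≤ M) :
    ∫ t in Icc p q, |v' t| ≤ M * (1 + K * (q - p)) := by
  have hint := integrableOn_deriv_of_abs_le hcont hv hs hbound
  have hvint : IntegrableOn v (Icc p q) := hcont.integrableOn_Icc
  have hftc : ∫ t in Icc p q, v' t = v q - v p := by
    rw [integral_Icc_eq_integral_Ioc, ← intervalIntegral.integral_of_le hpq,
      intervalIntegral.integral_eq_sub_of_hasDerivAt_of_le hpq hcont hv
        ((intervalIntegrable_iff_integrableOn_Icc_of_le hpq).mpr hint)]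
  have hp := left_mem_Icc.mpr hpq
  have hq := right_mem_Icc.mpr hpq
  have hdiff : s * (v q - v p) ≤ M := by
    rcases sq_eq_one_iff.mp hs with rfl | rfl <;>
      linarith [hv0 p hp, hv0 q hq, hvM p hp, hvM q hq]
  have hmass : ∫ t in Icc p q, v t ≤ M * (q - p) := by
    calc ∫ t in Icc p q, v t ≤ ∫ _ in Icc p q, M :=
          setIntegral_mono_on hvint (integrableOn_const measure_Icc_lt_top.ne)
            measurableSet_Icc hvM
      _ = M * (q - p) := by
          rw [setIntegral_const, Real.volume_real_Icc_of_le hpq, smul_eq_mul, mul_comm]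
  calc ∫ t in Icc p q, |v' t|
      ≤ ∫ t in Icc p q, (s * v' t + K * v t) := by
        rw [integral_Icc_eq_integral_Ioo, integral_Icc_eq_integral_Ioo]
        exact setIntegral_mono_on (hint.mono_set Ioo_subset_Icc_self).abs
          (IntegrableOn.mono_set ((hint.const_mul s).add (hvint.const_mul K)) Ioo_subset_Icc_self)
          measurableSet_Ioo hbound
    _ = s * (v q - v p) + K * ∫ t in Icc p q, v t := by
        rw [integral_add (hint.const_mul s) (hvint.const_mul K), integral_const_mul,
          integral_const_mul, hftc]
    _ ≤ M + K * (M * (q - p)) := by gcongr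
    _ = M * (1 + K * (q - p)) := by ring

end AbsDerivBound

lemma exists_sq_eq_one_abs_eq_mul {S : Set ℝ} {φ : ℝ → ℝ} (hS : IsPreconnected S)
    (hφ : ContinuousOn φ S) (hφ0 : ∀ t ∈ S, φ t ≠ 0) :
    ∃ τ : ℝ, τ ^ 2 = 1 ∧ ∀ t ∈ S, |φ t| = τ * φ t := by
  rcases hS.eq_or_eq_neg_of_sq_eq hφ.abs hφ (fun t _ => sq_abs (φ t)) (hφ0 _) with h | h
  · exact ⟨1, one_pow 2, fun t ht => (h ht).trans (one_mul _).symm⟩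
  · exact ⟨-1, by norm_num, fun t ht => (h ht).trans (neg_one_mul _).symm⟩

lemma abs_le_mul_add_of_neg_le_mul {σ κ r x : ℝ} (hσ : σ ^ 2 = 1) (hκr : 0 ≤ κ * r)
    (h : -(κ * r) ≤ σ * x) : |x| ≤ σ * x + 2 * κ * r := by
  rcases sq_eq_one_iff.mp hσ with rfl | rfl <;> rw [abs_le] <;> constructor <;> linarith

lemma exists_sq_eq_one_neg_le_mul {S : Set ℝ} {φ ψ a E : ℝ → ℝ} {κ : ℝ}
    (hψ : ∀ t ∈ S, ψ t = a t + E t) (ha : (∀ t ∈ S, 0 ≤ a t) ∨ (∀ t ∈ S, a t ≤ 0))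
    (hE : ∀ t ∈ S, |E t| ≤ κ * |φ t|) :
    ∃ σ : ℝ, σ ^ 2 = 1 ∧ ∀ t ∈ S, -(κ * |φ t|) ≤ σ * ψ t := by
  rcases ha with ha | ha
  · refine ⟨1, one_pow 2, fun t ht => ?_⟩
    linarith [hψ t ht, ha t ht, hE t ht, neg_abs_le (E t)]
  · refine ⟨-1, by norm_num, fun t ht => ?_⟩
    linarith [hψ t ht, ha t ht, hE t ht, le_abs_self (E t)]

section QuasiMonotone

variable {φ ψ : ℝ → ℝ} {σ κ p q : ℝ}

lemma exists_abs_deriv_inv_le (hφ : ∀ t ∈ Icc p q, HasDerivAt φ (ψ t) t)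
    (hφ0 : ∀ t ∈ Icc p q, φ t ≠ 0) (hσ : σ ^ 2 = 1) (hκ : 0 ≤ κ)
    (hψ : ∀ t ∈ Icc p q, -(κ * |φ t|) ≤ σ * ψ t) :
    ∃ (v v' : ℝ → ℝ) (s : ℝ), s ^ 2 = 1 ∧ ∀ t ∈ Icc p q, HasDerivAt v (v' t) t ∧
      v t = |φ t|⁻¹ ∧ |v' t| = |ψ t| / φ t ^ 2 ∧ |v' t| ≤ s * v' t + 2 * κ * v t := by
  obtain ⟨τ, hτ, hτφ⟩ := exists_sq_eq_one_abs_eq_mul isPreconnected_Icc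
    (fun t ht => (hφ t ht).continuousAt.continuousWithinAt) hφ0
  refine ⟨fun t => (τ * φ t)⁻¹, fun t => -(τ * ψ t) / (τ * φ t) ^ 2, -(σ * τ), by
    rw [neg_sq, mul_pow, hσ, hτ, one_mul], fun t ht => ?_⟩
  have hφt : |φ t| ≠ 0 := abs_ne_zero.mpr (hφ0 t ht)
  have hτabs : |τ| = 1 := by rcases sq_eq_one_iff.mp hτ with rfl | rfl <;> norm_num
  have hsq : (τ * φ t) ^ 2 = |φ t| ^ 2 := by rw [mul_pow, hτ, one_mul, sq_abs]
  have hderiv : |-(τ * ψ t) / (τ * φ t) ^ 2| = |ψ t| / φ t ^ 2 := by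
    rw [abs_div, abs_neg, abs_mul, hτabs, one_mul, abs_of_nonneg (sq_nonneg (τ * φ t)), hsq,
      sq_abs]
  refine ⟨((hφ t ht).const_mul τ).inv (hτφ t ht ▸ hφt), by rw [hτφ t ht], hderiv, ?_⟩
  have hrhs : -(σ * τ) * (-(τ * ψ t) / (τ * φ t) ^ 2) + 2 * κ * (τ * φ t)⁻¹
      = (σ * ψ t + 2 * κ * |φ t|) / φ t ^ 2 := by
    rw [hsq, ← hτφ t ht, ← sq_abs (φ t)]
    field_simp
    linear_combination σ * ψ t * hτ
  rw [hderiv, hrhs]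
  exact div_le_div_of_nonneg_right (abs_le_mul_add_of_neg_le_mul hσ
    (mul_nonneg hκ (abs_nonneg _)) (hψ t ht)) (sq_nonneg _)

lemma integrableOn_abs_div_sq_of_neg_le_mul (hφ : ∀ t ∈ Icc p q, HasDerivAt φ (ψ t) t)
    (hφ0 : ∀ t ∈ Icc p q, φ t ≠ 0) (hσ : σ ^ 2 = 1) (hκ : 0 ≤ κ)
    (hψ : ∀ t ∈ Icc p q, -(κ * |φ t|) ≤ σ * ψ t) :
    IntegrableOn (fun t => |ψ t| / φ t ^ 2) (Icc p q) := by
  obtain ⟨v, v', s, hs, hv⟩ := exists_abs_deriv_inv_le hφ hφ0 hσ hκ hψ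
  have hint := integrableOn_deriv_of_abs_le
    (fun t ht => (hv t ht).1.continuousAt.continuousWithinAt)
    (fun t ht => (hv t (Ioo_subset_Icc_self ht)).1) hs
    (fun t ht => (hv t (Ioo_subset_Icc_self ht)).2.2.2)
  exact IntegrableOn.congr_fun hint.abs (fun t ht => (hv t ht).2.2.1) measurableSet_Icc

lemma setIntegral_abs_div_sq_le_of_neg_le_mul (hφ : ∀ t ∈ Icc p q, HasDerivAt φ (ψ t) t)
    (hφ0 : ∀ t ∈ Icc p q, φ t ≠ 0) (hσ : σ ^ 2 = 1) (hκ : 0 ≤ κ)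
    (hψ : ∀ t ∈ Icc p q, -(κ * |φ t|) ≤ σ * ψ t) {α β m : ℝ} (hpα : p ≤ α) (hαβ : α ≤ β)
    (hβq : β ≤ q) (hm : 0 < m) (hmp : m ≤ |φ p|) (hmq : m ≤ |φ q|) :
    ∫ t in Icc α β, |ψ t| / φ t ^ 2 ≤
      m⁻¹ * Real.exp (2 * κ * (q - p)) * (1 + 2 * κ * (β - α)) := by
  obtain ⟨v, v', s, hs, hv⟩ := exists_abs_deriv_inv_le hφ hφ0 hσ hκ hψ
  have hsub : Icc α β ⊆ Icc p q := Icc_subset_Icc hpα hβq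
  have hpq : p ≤ q := hpα.trans (hαβ.trans hβq)
  have hcont : ContinuousOn v (Icc p q) :=
    fun t ht => (hv t ht).1.continuousAt.continuousWithinAt
  have hvm : ∀ {r}, r ∈ Icc p q → m ≤ |φ r| → v r ≤ m⁻¹ := fun hr hmr => by
    rw [(hv _ hr).2.1]
    exact inv_anti₀ hm hmr
  have hvM : ∀ t ∈ Icc p q, v t ≤ m⁻¹ * Real.exp (2 * κ * (q - p)) :=
    fun t ht => le_mul_exp_of_abs_deriv_le hcont
      (fun t ht => (hv t (Ioo_subset_Icc_self ht)).1) hs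
      (fun t ht => (hv t (Ioo_subset_Icc_self ht)).2.2.2) (by positivity) (by positivity)
      (hvm (left_mem_Icc.mpr hpq) hmp) (hvm (right_mem_Icc.mpr hpq) hmq) ht
  calc ∫ t in Icc α β, |ψ t| / φ t ^ 2 = ∫ t in Icc α β, |v' t| :=
        setIntegral_congr_fun measurableSet_Icc fun t ht => ((hv t (hsub ht)).2.2.1).symm
    _ ≤ m⁻¹ * Real.exp (2 * κ * (q - p)) * (1 + 2 * κ * (β - α)) :=
        setIntegral_abs_deriv_le (hcont.mono hsub)
          (fun t ht => (hv t (hsub (Ioo_subset_Icc_self ht))).1) hs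
          (fun t ht => (hv t (hsub (Ioo_subset_Icc_self ht))).2.2.2) hαβ (by positivity)
          (fun t ht => (hv t (hsub ht)).2.1 ▸ by positivity) (fun t ht => hvM t (hsub ht))

end QuasiMonotone

lemma setIntegral_abs_sub_mem_Icc_eq_add (x₀ : ℝ) {F : ℝ → ℝ} {α β : ℝ} (hα : 0 < α)
    (hF : IntegrableOn F (Icc α β)) (hF' : IntegrableOn (fun t => F (-t)) (Icc α β)) :
    ∫ z in {z | α ≤ |z - x₀| ∧ |z - x₀| ≤ β}, F (x₀ - z) =
      (∫ t in Icc α β, F t) + ∫ t in Icc α β, F (-t) := by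
  have hneg := Measure.measurePreserving_neg (volume : Measure ℝ)
  have hnegEmb : MeasurableEmbedding (Neg.neg : ℝ → ℝ) :=
    (MeasurableEquiv.neg ℝ).measurableEmbedding
  have hset : {z | α ≤ |z - x₀| ∧ |z - x₀| ≤ β} =
      (fun z => x₀ - z) ⁻¹' (Icc α β ∪ Neg.neg ⁻¹' Icc α β) := by
    ext z
    simp only [mem_union, mem_preimage, mem_Icc, mem_ofPred_eq, le_abs, abs_le]
    grind
  have hdisj : Disjoint (Icc α β) (Neg.neg ⁻¹' Icc α β) :=
    disjoint_left.mpr fun t ht ht' => by linarith [ht.1, (mem_preimage.mp ht').1]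
  have hF'' : IntegrableOn F (Neg.neg ⁻¹' Icc α β) := by
    simpa [Function.comp_def] using (hneg.integrableOn_comp_preimage hnegEmb).mpr hF'
  rw [hset, (Measure.measurePreserving_sub_left volume x₀).setIntegral_preimage_emb
      (MeasurableEquiv.subLeft x₀).measurableEmbedding F _,
    setIntegral_union hdisj (measurableSet_Icc.preimage measurable_neg) hF hF'',
    ← hneg.setIntegral_preimage_emb hnegEmb (fun t => F (-t))]
  simp only [neg_neg]

lemma integrableOn_and_setIntegral_abs_div_sq_comp_mul_le {γd γdd a E : ℝ → ℝ}
    {ε κ c₀ t₀ α β m : ℝ} (hε : ε ^ 2 = 1) (hκ : 0 ≤ κ) (ht₀ : 0 < t₀) (ht₀α : t₀ ≤ α)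
    (hαβ : α ≤ β) (hβ : β ≤ c₀) (hγdd : ∀ t, |t| ≤ c₀ → HasDerivAt γd (γdd t) t)
    (hQM : ∀ t, |t| ≤ c₀ → γdd t = a t + E t)
    (hsign : (∀ t ∈ Icc t₀ c₀, 0 ≤ a (ε * t)) ∨ (∀ t ∈ Icc t₀ c₀, a (ε * t) ≤ 0))
    (hE : ∀ t, |t| ≤ c₀ → |E t| ≤ κ * |γd t|) (hne : ∀ t, 0 < |t| → |t| ≤ c₀ → γd t ≠ 0)
    (hm : 0 < m) (hmγd : ∀ t, |t| = t₀ ∨ |t| = c₀ → m ≤ |γd t|) :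
    IntegrableOn (fun t => |γdd (ε * t)| / γd (ε * t) ^ 2) (Icc α β) ∧
      ∫ t in Icc α β, |γdd (ε * t)| / γd (ε * t) ^ 2 ≤
        m⁻¹ * (Real.exp (2 * κ * c₀) * (1 + 2 * κ * c₀)) := by
  have hεabs : |ε| = 1 := by rcases sq_eq_one_iff.mp hε with rfl | rfl <;> norm_num
  have habs : ∀ t ∈ Icc t₀ c₀, |ε * t| = t := fun t ht => by
    rw [abs_mul, hεabs, one_mul, abs_of_nonneg (ht₀.le.trans ht.1)]
  have hφ : ∀ t ∈ Icc t₀ c₀, HasDerivAt (fun u => γd (ε * u)) (ε * γdd (ε * t)) t :=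
    fun t ht => ((hγdd _ ((habs t ht).trans_le ht.2)).comp t
      ((hasDerivAt_id t).const_mul ε)).congr_deriv (by simp only [mul_one, mul_comm])
  have hφ0 : ∀ t ∈ Icc t₀ c₀, γd (ε * t) ≠ 0 := fun t ht =>
    hne _ ((habs t ht).symm ▸ ht₀.trans_le ht.1) ((habs t ht).trans_le ht.2)
  obtain ⟨σ, hσ, hσψ⟩ := exists_sq_eq_one_neg_le_mul (φ := fun t => γd (ε * t))
    (fun t ht => hQM _ ((habs t ht).trans_le ht.2)) hsign
    (fun t ht => hE _ ((habs t ht).trans_le ht.2))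
  have hψ : ∀ t ∈ Icc t₀ c₀, -(κ * |γd (ε * t)|) ≤ σ * ε * (ε * γdd (ε * t)) := fun t ht => by
    have h : σ * ε * (ε * γdd (ε * t)) = σ * γdd (ε * t) := by
      linear_combination σ * γdd (ε * t) * hε
    exact h ▸ hσψ t ht
  have hσε : (σ * ε) ^ 2 = 1 := by rw [mul_pow, hσ, hε, one_mul]
  have hψabs : (fun t => |ε * γdd (ε * t)| / γd (ε * t) ^ 2) =
      fun t => |γdd (ε * t)| / γd (ε * t) ^ 2 := by
    funext t
    rw [abs_mul, hεabs, one_mul]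
  have ht₀c₀ : t₀ ≤ c₀ := ht₀α.trans (hαβ.trans hβ)
  have hint := integrableOn_abs_div_sq_of_neg_le_mul hφ hφ0 hσε hκ hψ
  have hbound := setIntegral_abs_div_sq_le_of_neg_le_mul hφ hφ0 hσε hκ hψ ht₀α hαβ hβ hm
    (hmγd _ (Or.inl (habs t₀ (left_mem_Icc.mpr ht₀c₀))))
    (hmγd _ (Or.inr (habs c₀ (right_mem_Icc.mpr ht₀c₀))))
  rw [hψabs] at hint hbound
  refine ⟨hint.mono_set (Icc_subset_Icc ht₀α hβ), hbound.trans ?_⟩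
  rw [mul_assoc]
  gcongr <;> nlinarith

lemma setIntegral_abs_div_sq_sub_le {γd γdd a E : ℝ → ℝ} {κ c₀ t₀ α β m : ℝ} (x₀ c : ℝ)
    (hc : 0 ≤ c) (hκ : 0 ≤ κ) (ht₀ : 0 < t₀) (ht₀α : t₀ ≤ α) (hαβ : α ≤ β) (hβ : β ≤ c₀)
    (hγdd : ∀ t, |t| ≤ c₀ → HasDerivAt γd (γdd t) t)
    (hQM : ∀ t, |t| ≤ c₀ → γdd t = a t + E t)
    (hsignpos : (∀ t ∈ Ioc (0:ℝ) c₀, 0 ≤ a t) ∨ (∀ t ∈ Ioc (0:ℝ) c₀, a t ≤ 0))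
    (hsignneg : (∀ t ∈ Ico (-c₀) (0:ℝ), 0 ≤ a t) ∨ (∀ t ∈ Ico (-c₀) (0:ℝ), a t ≤ 0))
    (hE : ∀ t, |t| ≤ c₀ → |E t| ≤ κ * |γd t|) (hne : ∀ t, 0 < |t| → |t| ≤ c₀ → γd t ≠ 0)
    (hm : 0 < m) (hmγd : ∀ t, |t| = t₀ ∨ |t| = c₀ → m ≤ |γd t|) :
    ∫ z in {z | α ≤ |z - x₀| ∧ |z - x₀| ≤ β}, c * |γdd (x₀ - z)| / γd (x₀ - z) ^ 2 ≤
      2 * c * m⁻¹ * (Real.exp (2 * κ * c₀) * (1 + 2 * κ * c₀)) := by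
  have hside := fun ε hε hsign => integrableOn_and_setIntegral_abs_div_sq_comp_mul_le (ε := ε)
    hε hκ ht₀ ht₀α hαβ hβ hγdd hQM hsign hE hne hm hmγd
  have hpos : ∀ t ∈ Icc t₀ c₀, 1 * t ∈ Ioc 0 c₀ := fun t ht =>
    ⟨by linarith [ht.1], by linarith [ht.2]⟩
  have hneg : ∀ t ∈ Icc t₀ c₀, -1 * t ∈ Ico (-c₀) 0 := fun t ht =>
    ⟨by linarith [ht.2], by linarith [ht.1]⟩
  obtain ⟨hintPos, hboundPos⟩ := hside 1 (one_pow 2)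
    (hsignpos.imp (fun h t ht => h _ (hpos t ht)) (fun h t ht => h _ (hpos t ht)))
  obtain ⟨hintNeg, hboundNeg⟩ := hside (-1) (by norm_num)
    (hsignneg.imp (fun h t ht => h _ (hneg t ht)) (fun h t ht => h _ (hneg t ht)))
  simp only [one_mul, neg_one_mul] at hintPos hboundPos hintNeg hboundNeg
  simp_rw [mul_div_assoc]
  rw [setIntegral_abs_sub_mem_Icc_eq_add x₀ (ht₀.trans_le ht₀α) (hintPos.const_mul c)
    (hintNeg.const_mul c), integral_const_mul, integral_const_mul]
  nlinarith [mul_le_mul_of_nonneg_left hboundPos hc, mul_le_mul_of_nonneg_left hboundNeg hc]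

lemma exists_forall_mul_two_zpow_le {A c : ℝ} (hA : 0 ≤ A) (hc : 0 < c) :
    ∃ J : ℤ, ∀ j : ℤ, J ≤ j → A * 2 ^ (-j + 1) ≤ c := by
  obtain ⟨n, hn⟩ := pow_unbounded_of_one_lt (2 * A / c) one_lt_two
  refine ⟨n, fun j hj => ?_⟩
  calc A * (2:ℝ) ^ (-j + 1) ≤ A * 2 ^ (-(n : ℤ) + 1) := by
        gcongr
        norm_num
    _ = 2 * A / 2 ^ n := by
        rw [zpow_add₀ two_ne_zero, zpow_neg, zpow_natCast, zpow_one]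
        ring
    _ ≤ c := by
        rw [div_le_iff₀ (by positivity)]
        linarith [(div_lt_iff₀ hc).mp hn]

lemma two_zpow_mul_inv_le {b j : ℤ} {C y : ℝ} (hC : 0 < C) (hy : 0 < y)
    (h : (2:ℝ) ^ (-b - 1) < 2 ^ (-j) * y) : (2:ℝ) ^ j * (C⁻¹ * y)⁻¹ ≤ 2 * C * 2 ^ b := by
  have h2j : (2:ℝ) ^ j < 2 * 2 ^ b * y :=
    calc (2:ℝ) ^ j = 2 ^ (j + b + 1) * 2 ^ (-b - 1) := by
          rw [← zpow_add₀ two_ne_zero]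
          ring_nf
      _ < 2 ^ (j + b + 1) * (2 ^ (-j) * y) := by gcongr
      _ = 2 * 2 ^ b * y := by
          rw [← mul_assoc, ← zpow_add₀ two_ne_zero, show j + b + 1 + -j = b + 1 by ring,
            zpow_add_one₀ two_ne_zero]
          ring
  rw [mul_inv, inv_inv, ← mul_assoc, mul_inv_le_iff₀ hy]
  nlinarith

section Doubling

variable {g γd : ℝ → ℝ} {A C₀ c₀ : ℝ}

lemma ne_zero_of_doubling_bound (hA : 0 < A) (hC₀ : 0 < C₀) (hgpos : ∀ t, 0 < t → 0 < g t)
    (hdbl : ∀ t, |t| ≤ c₀ → C₀⁻¹ * g (A⁻¹ * |t|) ≤ |γd t|) {t : ℝ} (ht : 0 < |t|)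
    (htc : |t| ≤ c₀) : γd t ≠ 0 :=
  abs_pos.mp ((mul_pos (inv_pos.mpr hC₀) (hgpos _ (by positivity))).trans_le (hdbl t htc))

lemma le_abs_of_doubling_bound (hA : 1 ≤ A) (hC₀ : 0 < C₀) (hgpos : ∀ t, 0 < t → 0 < g t)
    (hgdbl : ∀ t₁ t₂, 0 ≤ t₁ → A * t₁ ≤ t₂ → 2 * g t₁ ≤ g t₂)
    (hdbl : ∀ t, |t| ≤ c₀ → C₀⁻¹ * g (A⁻¹ * |t|) ≤ |γd t|) {t₀ : ℝ} (ht₀ : 0 < t₀)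
    (hAt₀ : A * t₀ ≤ c₀) {t : ℝ} (ht : |t| = t₀ ∨ |t| = c₀) :
    C₀⁻¹ * g (A⁻¹ * t₀) ≤ |γd t| := by
  have hA0 : 0 < A := one_pos.trans_le hA
  have ht₀c₀ : t₀ ≤ c₀ := (le_mul_of_one_le_left ht₀.le hA).trans hAt₀
  rcases ht with ht | ht
  · exact ht ▸ hdbl t (ht ▸ ht₀c₀)
  · refine le_trans ?_ (ht ▸ hdbl t ht.le)
    have hmono : 2 * g (A⁻¹ * t₀) ≤ g (A⁻¹ * c₀) := hgdbl _ _ (by positivity) (by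
      rw [← mul_assoc, mul_inv_cancel₀ hA0.ne', one_mul, le_inv_mul_iff₀ hA0]; exact hAt₀)
    gcongr
    linarith [hgpos (A⁻¹ * t₀) (by positivity)]

end Doubling

theorem sublemma_part_ii_general
    (c₀ A C₀ κ : ℝ) (hc₀ : 0 < c₀) (hA : 1 ≤ A) (hC₀ : 1 ≤ C₀) (hκ : 0 ≤ κ)
    (g : ℝ → ℝ)
    (hgpos : ∀ t, 0 < t → 0 < g t)
    (hgdbl : ∀ t₁ t₂, 0 ≤ t₁ → A * t₁ ≤ t₂ → 2 * g t₁ ≤ g t₂)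
    (γd γdd : ℝ × ℝ → ℝ → ℝ)
    (hγdd : ∀ x t, |t| ≤ c₀ → HasDerivAt (γd x) (γdd x t) t)
    (a E : ℝ × ℝ → ℝ → ℝ)
    (hQM : ∀ x t, |t| ≤ c₀ → γdd x t = a x t + E x t)
    (hsignpos : ∀ x, (∀ t ∈ Ioc (0:ℝ) c₀, 0 ≤ a x t) ∨ (∀ t ∈ Ioc (0:ℝ) c₀, a x t ≤ 0))
    (hsignneg : ∀ x, (∀ t ∈ Ico (-c₀) (0:ℝ), 0 ≤ a x t) ∨ (∀ t ∈ Ico (-c₀) (0:ℝ), a x t ≤ 0))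
    (hE : ∀ x t, |t| ≤ c₀ → |E x t| ≤ κ * |γd x t|)
    (hdbl : ∀ x t, |t| ≤ c₀ →
      C₀⁻¹ * g (A⁻¹ * |t|) ≤ |γd x t| ∧ |γd x t| ≤ C₀ * g (A * |t|))
    (B : ℝ) (hB : B = 2 ^ 20 * A)
    (bj : ℤ → ℤ)
    (hbj : ∀ j : ℤ, (2:ℝ) ^ (-(bj j) - 1) < (2:ℝ) ^ (-j) * g ((2:ℝ) ^ (5 - j) * B⁻¹) ∧
      (2:ℝ) ^ (-j) * g ((2:ℝ) ^ (5 - j) * B⁻¹) ≤ (2:ℝ) ^ (-(bj j))) :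
    ∃ C : ℝ, 0 < C ∧ ∃ J : ℤ, ∀ j : ℤ, J ≤ j → ∀ x : ℝ × ℝ,
      (∫ z₁ in {z₁ : ℝ | (2:ℝ) ^ (-j - 1) ≤ |z₁ - x.1| ∧ |z₁ - x.1| ≤ (2:ℝ) ^ (-j + 1)},
        (2:ℝ) ^ j * |γdd x (x.1 - z₁)| / (γd x (x.1 - z₁)) ^ 2) ≤ C * (2:ℝ) ^ (bj j) := by
  have hA0 : 0 < A := one_pos.trans_le hA
  have hC₀0 : 0 < C₀ := one_pos.trans_le hC₀
  obtain ⟨J, hJ⟩ := exists_forall_mul_two_zpow_le hA0.le hc₀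
  refine ⟨4 * C₀ * (Real.exp (2 * κ * c₀) * (1 + 2 * κ * c₀)), by positivity, J,
    fun j hj x => ?_⟩
  set t₀ : ℝ := 2 ^ (-j - 15) with ht₀_def
  have ht₀ : 0 < t₀ := by positivity
  have ht₀α : t₀ ≤ 2 ^ (-j - 1) := zpow_le_zpow_right₀ one_le_two (by omega)
  have hαβ : (2:ℝ) ^ (-j - 1) ≤ 2 ^ (-j + 1) := zpow_le_zpow_right₀ one_le_two (by omega)
  have hβc₀ : (2:ℝ) ^ (-j + 1) ≤ c₀ := (le_mul_of_one_le_left (by positivity) hA).trans (hJ j hj)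
  have hAt₀ : A * t₀ ≤ c₀ := le_trans (by gcongr; exact ht₀α.trans hαβ) (hJ j hj)
  have harg : A⁻¹ * t₀ = 2 ^ (5 - j) * B⁻¹ := by
    have h : (2:ℝ) ^ (-j - 15) = 2 ^ (5 - j) * ((2:ℝ) ^ (20:ℤ))⁻¹ := by
      rw [← zpow_neg, ← zpow_add₀ two_ne_zero]
      ring_nf
    rw [hB, ht₀_def, h, mul_inv, zpow_ofNat]
    ring
  have hg : 0 < g (A⁻¹ * t₀) := hgpos _ (by positivity)
  have hγd₀ : ∀ t, |t| ≤ c₀ → C₀⁻¹ * g (A⁻¹ * |t|) ≤ |γd x t| := fun t ht => (hdbl x t ht).1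
  refine (setIntegral_abs_div_sq_sub_le x.1 _ (by positivity) hκ ht₀ ht₀α hαβ hβc₀ (hγdd x)
    (hQM x) (hsignpos x) (hsignneg x) (hE x)
    (fun _ => ne_zero_of_doubling_bound hA0 hC₀0 hgpos hγd₀) (mul_pos (inv_pos.mpr hC₀0) hg)
    (fun _ => le_abs_of_doubling_bound hA hC₀0 hgpos hgdbl hγd₀ ht₀ hAt₀)).trans ?_
  have h2j := two_zpow_mul_inv_le hC₀0 hg (harg ▸ (hbj j).1)
  nlinarith [mul_le_mul_of_nonneg_left h2j
    (by positivity : (0:ℝ) ≤ 2 * (Real.exp (2 * κ * c₀) * (1 + 2 * κ * c₀)))]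

/-- Sublemma, part (ii).  Under the quasi-monotonicity hypothesis
`γ̈(x,t) = a(x,t) + O(γ̇(x,t))` and the doubling bounds
`C₀⁻¹ g(A⁻¹|t|) ≤ |γ̇(x,t)| ≤ C₀ g(A|t|)`, one has, for large `j` and uniformly in `x`,
`∫_{2^{-j-1} ≤ |z₁-x₁| ≤ 2^{-j+1}} 2^j |γ̈(x, x₁-z₁)| / (γ̇(x, x₁-z₁))² dz₁ ≲ 2^{b_j}`,
where `2^{-b_j-1} < 2^{-j} g(2^{5-j} B⁻¹) ≤ 2^{-b_j}` and `B = 2^20 A`. -/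
theorem sublemma_part_ii
    (c₀ A C₀ κ : ℝ) (hc₀ : 0 < c₀) (hA : 1 ≤ A) (hC₀ : 1 ≤ C₀) (hκ : 0 ≤ κ)
    (g : ℝ → ℝ)
    (hgcont : ContinuousOn g (Ici 0)) (hg0 : g 0 = 0)
    (hgpos : ∀ t, 0 < t → 0 < g t)
    (hgdbl : ∀ t₁ t₂, 0 ≤ t₁ → A * t₁ ≤ t₂ → 2 * g t₁ ≤ g t₂)
    (γ γd γdd : ℝ × ℝ → ℝ → ℝ)
    (hγd : ∀ x t, |t| ≤ c₀ → HasDerivAt (γ x) (γd x t) t)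
    (hγdd : ∀ x t, |t| ≤ c₀ → HasDerivAt (γd x) (γdd x t) t)
    (a E : ℝ × ℝ → ℝ → ℝ)
    (hQM : ∀ x t, |t| ≤ c₀ → γdd x t = a x t + E x t)
    (hsignpos : ∀ x, (∀ t ∈ Ioc (0:ℝ) c₀, 0 ≤ a x t) ∨ (∀ t ∈ Ioc (0:ℝ) c₀, a x t ≤ 0))
    (hsignneg : ∀ x, (∀ t ∈ Ico (-c₀) (0:ℝ), 0 ≤ a x t) ∨ (∀ t ∈ Ico (-c₀) (0:ℝ), a x t ≤ 0))
    (hE : ∀ x t, |t| ≤ c₀ → |E x t| ≤ κ * |γd x t|)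
    (hdbl : ∀ x t, |t| ≤ c₀ →
      C₀⁻¹ * g (A⁻¹ * |t|) ≤ |γd x t| ∧ |γd x t| ≤ C₀ * g (A * |t|))
    (B : ℝ) (hB : B = 2 ^ 20 * A)
    (bj : ℤ → ℤ)
    (hbj : ∀ j : ℤ, (2:ℝ) ^ (-(bj j) - 1) < (2:ℝ) ^ (-j) * g ((2:ℝ) ^ (5 - j) * B⁻¹) ∧
      (2:ℝ) ^ (-j) * g ((2:ℝ) ^ (5 - j) * B⁻¹) ≤ (2:ℝ) ^ (-(bj j))) :
    ∃ C : ℝ, 0 < C ∧ ∃ J : ℤ, ∀ j : ℤ, J ≤ j → ∀ x : ℝ × ℝ,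
      (∫ z₁ in {z₁ : ℝ | (2:ℝ) ^ (-j - 1) ≤ |z₁ - x.1| ∧ |z₁ - x.1| ≤ (2:ℝ) ^ (-j + 1)},
        (2:ℝ) ^ j * |γdd x (x.1 - z₁)| / (γd x (x.1 - z₁)) ^ 2) ≤ C * (2:ℝ) ^ (bj j) :=
  sublemma_part_ii_general c₀ A C₀ κ hc₀ hA hC₀ hκ g hgpos hgdbl γd γdd hγdd a E hQM hsignpos
    hsignneg hE hdbl B hB bj hbj
end
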